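/- Let X be a finite-dimensional real inner product space, let F ⊆ X be a nonempty closed bounded convex set with 0 in the interior of F whose Minkowski gauge ρ_F is differentiable at every point of X ∖ {0}, and let Ω_1, …, Ω_n ⊆ X be nonempty closed convex sets. Set T(x) := Σ_{i=1}^n T^F_{Ω_i}(x), assume S := {x : T(x) = inf_X T} ≠ ∅, and let L ≥ 0 be a Lipschitz constant of T. Define g_F(x) := ∇ρ_F(x) for x ≠ 0 and g_F(0) := 0. Let (α_k) be positive reals with Σα_k = ∞ and ℓ² := Σα_k² < ∞, let x_1 ∈ X, and let (x_k) satisfy x_{k+1} = x_k + α_k Σ_{i=1}^n g_F(ω_{ik} − x_k), where ω_{ik} ∈ Π^F_{Ω_i}(x_k) is an arbitrary generalized projection point. Then (x_k) converges to an optimal solution, V_k := min{T(x_j) : j ≤ k} converges to V̂ := inf_X T, and V_k − V̂ ≤ (d(x_1; S)² + L²ℓ²) / (2 Σ_{j=1}^k α_j) for every k. -/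

import Mathlib

/-- The minimal time function `T^F_Ω(x) := inf{t ≥ 0 : Ω ∩ (x + tF) ≠ ∅}`,
with values in the extended reals (`sInf ∅ = ⊤`). -/
noncomputable def minTime {X : Type*} [AddCommGroup X] [Module ℝ X]
    (F Ω : Set X) (x : X) : EReal :=
  sInf {r : EReal | ∃ t : ℝ, 0 ≤ t ∧ r = (t : EReal) ∧ ∃ f ∈ F, x + t • f ∈ Ω}

/-- The Minkowski gauge `ρ_F(x) := inf{t ≥ 0 : x ∈ tF}`, with values in the
extended reals (`sInf ∅ = ⊤`). -/
noncomputable def gaugeE {X : Type*} [AddCommGroup X] [Module ℝ X]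
    (F : Set X) (x : X) : EReal :=
  sInf {r : EReal | ∃ t : ℝ, 0 ≤ t ∧ r = (t : EReal) ∧ ∃ f ∈ F, x = t • f}

/-- The generalized projection `Π^F_Ω(x) := (x + T^F_Ω(x)·F) ∩ Ω`. -/
noncomputable def genProj {X : Type*} [AddCommGroup X] [Module ℝ X]
    (F Ω : Set X) (x : X) : Set X :=
  {w | w ∈ Ω ∧ ∃ f ∈ F, w = x + (minTime F Ω x).toReal • f}

/-!
With `ρ_F = gauge F`, the minimal time `T^F_Ω(x)` is `inf_{u ∈ Ω} ρ_F(u - x)`, attained at the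
generalized projections `ω ∈ Π^F_Ω(x)`. The gradient inequality for the convex gauge, together with
first-order optimality of `ω` for `u ↦ ρ_F(u - x)` on the convex set `Ω`, shows that
`-g_F(ω - x)` is a subgradient of `T^F_Ω` at `x`. So the recursion is the subgradient method for
the convex `L`-Lipschitz function `T`, and for every `s`
`‖x_{k+1} - s‖² ≤ ‖x_k - s‖² - 2 α_k (T(x_k) - T(s)) + α_k² L²`.
Summing gives the rate and the convergence of `V_k`. For `s ∈ S` the estimate makes `(x_k)`
quasi-Fejér monotone with respect to `S`; since `∑ α_k = ∞`, some subsequence has values tending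
to `V̂`, a cluster point of it lies in `S`, and quasi-Fejér monotonicity forces the whole sequence
to converge to it.
-/

open Filter Metric Set RealInnerProductSpace Topology
open scoped NNReal

section QuasiFejer

variable {d e : ℕ → ℝ}

lemma antitone_add_tsum_nat_add (he : Summable e) (h : ∀ k, d (k + 1) ≤ d k + e k) :
    Antitone fun k => d k + ∑' j, e (j + k) := by
  refine antitone_nat_of_succ_le fun k => ?_
  have htail : ∑' j, e (j + k) = e k + ∑' j, e (j + (k + 1)) := by
    rw [((summable_nat_add_iff k).mpr he).tsum_eq_zero_add, zero_add]
    simp only [add_right_comm _ 1 k, add_assoc]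
  linarith [h k]

lemma le_add_tsum_of_le_add (he0 : ∀ k, 0 ≤ e k) (he : Summable e)
    (h : ∀ k, d (k + 1) ≤ d k + e k) (k : ℕ) : d k ≤ d 0 + ∑' j, e j := by
  have := antitone_add_tsum_nat_add he h (Nat.zero_le k)
  simp only [add_zero] at this
  linarith [(tsum_nonneg fun j => he0 (j + k) : 0 ≤ ∑' j, e (j + k))]

lemma exists_tendsto_of_le_add (hd : ∀ k, 0 ≤ d k) (he0 : ∀ k, 0 ≤ e k) (he : Summable e)
    (h : ∀ k, d (k + 1) ≤ d k + e k) : ∃ l, Tendsto d atTop (𝓝 l) := by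
  have hbdd : BddBelow (range fun k => d k + ∑' j, e (j + k)) :=
    ⟨0, by
      rintro _ ⟨k, rfl⟩
      exact add_nonneg (hd k) (tsum_nonneg fun j => he0 (j + k) : 0 ≤ ∑' j, e (j + k))⟩
  refine ⟨⨅ k, d k + ∑' j, e (j + k), ?_⟩
  simpa using (tendsto_atTop_ciInf (antitone_add_tsum_nat_add he h) hbdd).sub
    (tendsto_sum_nat_add e)

lemma tendsto_of_sq_dist_le_add {Y : Type*} [PseudoMetricSpace Y] {u : ℕ → Y} {p : Y}
    (he0 : ∀ k, 0 ≤ e k) (he : Summable e)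
    (h : ∀ k, dist (u (k + 1)) p ^ 2 ≤ dist (u k) p ^ 2 + e k) {φ : ℕ → ℕ} (hφ : StrictMono φ)
    (hp : Tendsto (u ∘ φ) atTop (𝓝 p)) : Tendsto u atTop (𝓝 p) := by
  obtain ⟨l, hl⟩ := exists_tendsto_of_le_add (d := fun k => dist (u k) p ^ 2)
    (fun k => sq_nonneg _) he0 he h
  have hsub : Tendsto (fun k => dist (u (φ k)) p ^ 2) atTop (𝓝 0) := by
    simpa using ((tendsto_iff_dist_tendsto_zero.mp hp).pow 2)
  obtain rfl : l = 0 := tendsto_nhds_unique (hl.comp hφ.tendsto_atTop) hsub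
  rw [tendsto_iff_dist_tendsto_zero]
  simpa [Real.sqrt_sq dist_nonneg] using hl.sqrt

end QuasiFejer

lemma frequently_lt_of_summable_mul {α b : ℕ → ℝ} (hα : ∀ k, 0 ≤ α k) (hdiv : ¬Summable α)
    (hs : Summable fun k => α k * b k) {ε : ℝ} (hε : 0 < ε) : ∃ᶠ k in atTop, b k < ε := by
  refine fun hev => hdiv (.of_norm_bounded_eventually_nat (hs.div_const ε) ?_)
  filter_upwards [hev] with k hk
  rw [Real.norm_of_nonneg (hα k), le_div_iff₀ hε]
  exact mul_le_mul_of_nonneg_left (not_lt.mp hk) (hα k)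

lemma ConvexOn.add_le_of_hasFDerivAt {E : Type*} [NormedAddCommGroup E] [NormedSpace ℝ E]
    {s : Set E} {f : E → ℝ} {f' : E →L[ℝ] ℝ} {a y : E} (hf : ConvexOn ℝ s f) (ha : a ∈ s)
    (hy : y ∈ s) (hf' : HasFDerivAt f f' a) : f a + f' (y - a) ≤ f y := by
  have hline : HasDerivAt (f ∘ AffineMap.lineMap a y) (f' (y - a)) (0 : ℝ) :=
    hf'.comp_hasDerivAt_of_eq (0 : ℝ) AffineMap.hasDerivAt_lineMap
      (AffineMap.lineMap_apply_zero a y).symm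
  have := (hf.comp_affineMap (AffineMap.lineMap a y)).le_slope_of_hasDerivAt
    (by simpa using ha) (by simpa using hy) one_pos hline
  simp only [slope_def_field, Function.comp_apply, AffineMap.lineMap_apply_zero,
    AffineMap.lineMap_apply_one, sub_zero, div_one] at this
  linarith

section SubgradientMethod

variable {X : Type*} [NormedAddCommGroup X] [InnerProductSpace ℝ X] {f : X → ℝ} {K : ℝ≥0}

lemma LipschitzWith.norm_le_of_subgradient (hf : LipschitzWith K f) {a g : X}
    (hg : ∀ s, f a + ⟪g, s - a⟫ ≤ f s) : ‖g‖ ≤ K := by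
  have hstep := hg (a + g)
  rw [add_sub_cancel_left, real_inner_self_eq_norm_sq] at hstep
  have hlip : f (a + g) - f a ≤ K * ‖g‖ := by
    simpa [Real.dist_eq] using (le_abs_self _).trans (hf.dist_le_mul (a + g) a)
  rcases (norm_nonneg g).eq_or_lt with h0 | h0
  · exact h0 ▸ K.2
  · exact le_of_mul_le_mul_right (by linarith) h0

structure IsSubgradientIteration (f : X → ℝ) (α : ℕ → ℝ) (x g : ℕ → X) : Prop where
  subgradient : ∀ k s, f (x k) + ⟪g k, s - x k⟫ ≤ f s
  succ : ∀ k, x (k + 1) = x k - α k • g k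

namespace IsSubgradientIteration

variable {α : ℕ → ℝ} {x g : ℕ → X}

lemma sq_norm_sub_succ_le (h : IsSubgradientIteration f α x g) (hf : LipschitzWith K f)
    (hα : ∀ k, 0 ≤ α k) (k : ℕ) (s : X) :
    ‖x (k + 1) - s‖ ^ 2 ≤ ‖x k - s‖ ^ 2 - 2 * α k * (f (x k) - f s) + α k ^ 2 * K ^ 2 := by
  have hinner : ⟪x k - s, g k⟫ ≥ f (x k) - f s := by
    rw [real_inner_comm, ← neg_sub, inner_neg_right]
    linarith [h.subgradient k s]
  have hnorm : ‖g k‖ ^ 2 ≤ K ^ 2 :=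
    pow_le_pow_left₀ (norm_nonneg _) (hf.norm_le_of_subgradient (h.subgradient k)) 2
  rw [h.succ k, sub_right_comm, norm_sub_sq_real, real_inner_smul_right, norm_smul,
    Real.norm_of_nonneg (hα k), mul_pow]
  nlinarith [hα k, sq_nonneg (α k)]

lemma sq_norm_sub_add_sum_le (h : IsSubgradientIteration f α x g) (hf : LipschitzWith K f)
    (hα : ∀ k, 0 ≤ α k) (s : X) (m : ℕ) :
    ‖x m - s‖ ^ 2 + 2 * ∑ j ∈ Finset.range m, α j * (f (x j) - f s) ≤
      ‖x 0 - s‖ ^ 2 + K ^ 2 * ∑ j ∈ Finset.range m, α j ^ 2 := by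
  induction m with
  | zero => simp
  | succ m ih =>
    simp only [Finset.sum_range_succ]
    linarith [h.sq_norm_sub_succ_le hf hα m s]

lemma sub_le_div_sum (h : IsSubgradientIteration f α x g) (hf : LipschitzWith K f)
    (hα : ∀ k, 0 < α k) (hsq : Summable fun k => α k ^ 2) (s : X) {k : ℕ} {c : ℝ}
    (hc : ∀ j ≤ k, c ≤ f (x j)) :
    c - f s ≤ (‖x 0 - s‖ ^ 2 + K ^ 2 * ∑' j, α j ^ 2) / (2 * ∑ j ∈ Finset.range (k + 1), α j) := by
  have hpos : 0 < ∑ j ∈ Finset.range (k + 1), α j :=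
    Finset.sum_pos (fun j _ => hα j) Finset.nonempty_range_add_one
  have hsum : (∑ j ∈ Finset.range (k + 1), α j) * (c - f s) ≤
      ∑ j ∈ Finset.range (k + 1), α j * (f (x j) - f s) := by
    rw [Finset.sum_mul]
    refine Finset.sum_le_sum fun j hj => mul_le_mul_of_nonneg_left ?_ (hα j).le
    linarith [hc j (Nat.lt_succ_iff.mp (Finset.mem_range.mp hj))]
  have htsum : ∑ j ∈ Finset.range (k + 1), α j ^ 2 ≤ ∑' j, α j ^ 2 :=
    hsq.sum_le_tsum _ fun j _ => sq_nonneg _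
  rw [le_div_iff₀ (by positivity)]
  nlinarith [h.sq_norm_sub_add_sum_le hf (fun j => (hα j).le) s (k + 1), sq_nonneg K,
    sq_nonneg ‖x (k + 1) - s‖]

lemma tendsto_of_le_of_le_iterates (h : IsSubgradientIteration f α x g) (hf : LipschitzWith K f)
    (hα : ∀ k, 0 < α k) (hdiv : ¬Summable α) (hsq : Summable fun k => α k ^ 2) {s : X}
    {c : ℕ → ℝ} (hcs : ∀ k, f s ≤ c k) (hc : ∀ k, ∀ j ≤ k, c k ≤ f (x j)) :
    Tendsto c atTop (𝓝 (f s)) := by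
  have hsum : Tendsto (fun k => 2 * ∑ j ∈ Finset.range (k + 1), α j) atTop atTop :=
    (((not_summable_iff_tendsto_nat_atTop_of_nonneg fun j => (hα j).le).mp hdiv).comp
      (tendsto_add_atTop_nat 1)).const_mul_atTop two_pos
  set B := ‖x 0 - s‖ ^ 2 + K ^ 2 * ∑' j, α j ^ 2
  have hbound : Tendsto (fun k => f s + B / (2 * ∑ j ∈ Finset.range (k + 1), α j)) atTop
      (𝓝 (f s)) := by
    simpa using tendsto_const_nhds.add (tendsto_const_nhds.div_atTop hsum)
  refine tendsto_of_tendsto_of_tendsto_of_le_of_le tendsto_const_nhds hbound hcs fun k => ?_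
  linarith [h.sub_le_div_sum hf hα hsq s (hc k)]

lemma summable_mul_sub (h : IsSubgradientIteration f α x g) (hf : LipschitzWith K f)
    (hα : ∀ k, 0 ≤ α k) (hsq : Summable fun k => α k ^ 2) {s : X} (hs : ∀ y, f s ≤ f y) :
    Summable fun j => α j * (f (x j) - f s) := by
  refine summable_of_sum_range_le (c := (‖x 0 - s‖ ^ 2 + K ^ 2 * ∑' j, α j ^ 2) / 2)
    (fun j => mul_nonneg (hα j) (sub_nonneg.mpr (hs _))) fun m => ?_
  have htsum : ∑ j ∈ Finset.range m, α j ^ 2 ≤ ∑' j, α j ^ 2 :=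
    hsq.sum_le_tsum _ fun j _ => sq_nonneg _
  nlinarith [h.sq_norm_sub_add_sum_le hf hα s m, sq_nonneg K, sq_nonneg ‖x m - s‖]

lemma sq_dist_succ_le_of_minimizer (h : IsSubgradientIteration f α x g) (hf : LipschitzWith K f)
    (hα : ∀ k, 0 ≤ α k) {s : X} (hs : ∀ y, f s ≤ f y) (k : ℕ) :
    dist (x (k + 1)) s ^ 2 ≤ dist (x k) s ^ 2 + K ^ 2 * α k ^ 2 := by
  rw [dist_eq_norm, dist_eq_norm]
  nlinarith [h.sq_norm_sub_succ_le hf hα k s, hs (x k), hα k]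

lemma exists_subseq_tendsto_minimizer [ProperSpace X] (h : IsSubgradientIteration f α x g)
    (hf : LipschitzWith K f) (hα : ∀ k, 0 ≤ α k) (hdiv : ¬Summable α)
    (hsq : Summable fun k => α k ^ 2) {s : X} (hs : ∀ y, f s ≤ f y) :
    ∃ (xb : X) (φ : ℕ → ℕ), StrictMono φ ∧ Tendsto (x ∘ φ) atTop (𝓝 xb) ∧ ∀ y, f xb ≤ f y := by
  have he : Summable fun k => K ^ 2 * α k ^ 2 := hsq.mul_left _
  have hfreq (q : ℕ) : ∃ᶠ k in atTop, f (x k) - f s < 1 / (q + 1) :=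
    frequently_lt_of_summable_mul hα hdiv (h.summable_mul_sub hf hα hsq hs) (by positivity)
  obtain ⟨φ, hφ, hφs⟩ := extraction_forall_of_frequently hfreq
  have hbdd (k : ℕ) : x k ∈ closedBall s √(dist (x 0) s ^ 2 + ∑' j, K ^ 2 * α j ^ 2) :=
    (Real.le_sqrt dist_nonneg (by positivity)).mpr <| le_add_tsum_of_le_add
      (d := fun k => dist (x k) s ^ 2) (fun j => by positivity) he
      (h.sq_dist_succ_le_of_minimizer hf hα hs) k
  obtain ⟨xb, -, ψ, hψ, hlim⟩ := (isCompact_closedBall _ _).tendsto_subseq fun q => hbdd (φ q)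
  have hval : Tendsto (fun q => f (x (φ (ψ q)))) atTop (𝓝 (f s)) := by
    have hgap := (tendsto_one_div_add_atTop_nhds_zero_nat (𝕜 := ℝ)).comp hψ.tendsto_atTop
    refine tendsto_of_tendsto_of_tendsto_of_le_of_le tendsto_const_nhds
      (by simpa using tendsto_const_nhds.add hgap) (fun q => hs _) fun q => ?_
    linarith [one_div (ψ q + 1 : ℝ) ▸ hφs (ψ q)]
  refine ⟨xb, φ ∘ ψ, hφ.comp hψ, hlim, fun y => ?_⟩
  rw [tendsto_nhds_unique ((hf.continuous.tendsto xb).comp hlim) hval]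
  exact hs y

lemma exists_tendsto_minimizer [ProperSpace X] (h : IsSubgradientIteration f α x g)
    (hf : LipschitzWith K f) (hα : ∀ k, 0 ≤ α k) (hdiv : ¬Summable α)
    (hsq : Summable fun k => α k ^ 2) {s : X} (hs : ∀ y, f s ≤ f y) :
    ∃ xb, (∀ y, f xb ≤ f y) ∧ Tendsto x atTop (𝓝 xb) := by
  obtain ⟨xb, φ, hφ, hlim, hxb⟩ := h.exists_subseq_tendsto_minimizer hf hα hdiv hsq hs
  exact ⟨xb, hxb, tendsto_of_sq_dist_le_add (fun k => by positivity) (hsq.mul_left _)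
    (h.sq_dist_succ_le_of_minimizer hf hα hxb) hφ hlim⟩

end IsSubgradientIteration

end SubgradientMethod

section MinimalTime

variable {X : Type*} [AddCommGroup X] [Module ℝ X] {F Ω : Set X} {x u w : X}

lemma minTime_nonneg : 0 ≤ minTime F Ω x :=
  le_sInf <| by rintro _ ⟨t, ht, rfl, -⟩; exact_mod_cast ht

lemma minTime_le {t : ℝ} (ht : 0 ≤ t) {f : X} (hf : f ∈ F) (h : x + t • f ∈ Ω) :
    minTime F Ω x ≤ t :=
  sInf_le ⟨t, ht, rfl, f, hf, h⟩

lemma minTime_le_gauge (hF : Absorbent ℝ F) (hu : u ∈ Ω) :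
    minTime F Ω x ≤ gauge F (u - x) := by
  refine EReal.le_of_forall_lt_iff_le.mp fun a ha => ?_
  obtain ⟨b, hb, hba, f, hf, hfb⟩ := exists_lt_of_gauge_lt hF (EReal.coe_lt_coe_iff.mp ha)
  exact (minTime_le hb.le hf (by simp only at hfb; rwa [hfb, add_sub_cancel])).trans
    (EReal.coe_le_coe_iff.mpr hba.le)

lemma minTime_toReal_le_gauge (hF : Absorbent ℝ F) (hu : u ∈ Ω) :
    (minTime F Ω x).toReal ≤ gauge F (u - x) := by
  simpa using EReal.toReal_le_toReal (minTime_le_gauge hF hu)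
    (ne_bot_of_le_ne_bot EReal.zero_ne_bot minTime_nonneg) (EReal.coe_ne_top _)

lemma le_minTime_toReal (hF : Absorbent ℝ F) (hu : u ∈ Ω) {c : ℝ}
    (hc : ∀ v ∈ Ω, c ≤ gauge F (v - x)) : c ≤ (minTime F Ω x).toReal := by
  have hle : (c : EReal) ≤ minTime F Ω x := le_sInf <| by
    rintro _ ⟨t, ht, rfl, f, hf, hmem⟩
    have hct := hc _ hmem
    rw [add_sub_cancel_left, gauge_smul_of_nonneg ht, smul_eq_mul] at hct
    exact_mod_cast hct.trans (mul_le_of_le_one_right ht (gauge_le_one_of_mem hf))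
  simpa using EReal.toReal_le_toReal hle (EReal.coe_ne_bot c)
    ((minTime_le_gauge hF hu).trans_lt (EReal.coe_lt_top _)).ne

lemma gauge_sub_eq_of_mem_genProj (hF : Absorbent ℝ F) (hw : w ∈ genProj F Ω x) :
    gauge F (w - x) = (minTime F Ω x).toReal := by
  obtain ⟨hwΩ, f, hf, rfl⟩ := hw
  refine le_antisymm ?_ (minTime_toReal_le_gauge hF hwΩ)
  have ht : 0 ≤ (minTime F Ω x).toReal := EReal.toReal_nonneg minTime_nonneg
  rw [add_sub_cancel_left, gauge_smul_of_nonneg ht, smul_eq_mul]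
  exact mul_le_of_le_one_right ht (gauge_le_one_of_mem hf)

lemma gaugeE_eq_minTime (F : Set X) (y : X) : gaugeE F y = minTime F {y} 0 := by
  simp only [gaugeE, minTime, zero_add, mem_singleton_iff, eq_comm]

lemma gaugeE_toReal (hF : Absorbent ℝ F) (y : X) : (gaugeE F y).toReal = gauge F y := by
  rw [gaugeE_eq_minTime]
  exact le_antisymm (by simpa using minTime_toReal_le_gauge hF (mem_singleton y) (x := 0))
    (le_minTime_toReal hF (mem_singleton y) (by simp))

lemma convexOn_gauge (hc : Convex ℝ F) (hF : Absorbent ℝ F) : ConvexOn ℝ univ (gauge F) :=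
  ⟨convex_univ, fun a _ b _ s t hs ht _ => by
    simpa [gauge_smul_of_nonneg hs, gauge_smul_of_nonneg ht] using
      gauge_add_le hc hF (s • a) (t • b)⟩

end MinimalTime

section GaugeSubgradient

variable {X : Type*} [NormedAddCommGroup X] [InnerProductSpace ℝ X] [CompleteSpace X]
  {F Ω : Set X} {x w : X}

lemma minTime_add_inner_gradient_le (hFconv : Convex ℝ F) (h0F : F ∈ 𝓝 0) (hΩ : Convex ℝ Ω)
    (hw : w ∈ genProj F Ω x) (hd : DifferentiableAt ℝ (gauge F) (w - x)) (s : X) :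
    (minTime F Ω x).toReal + ⟪gradient (gauge F) (w - x), x - s⟫ ≤ (minTime F Ω s).toReal := by
  have hF : Absorbent ℝ F := absorbent_nhds_zero h0F
  have hgrad (v : X) : ⟪gradient (gauge F) (w - x), v⟫ = fderiv ℝ (gauge F) (w - x) v :=
    InnerProductSpace.toDual_symm_apply
  have hmin : IsMinOn (gauge F ∘ (· - x)) Ω w := fun v hv => by
    simpa only [mem_ofPred_eq, Function.comp_apply, gauge_sub_eq_of_mem_genProj hF hw] using
      minTime_toReal_le_gauge hF hv
  have hshift : HasFDerivAt (gauge F ∘ (· - x)) (fderiv ℝ (gauge F) (w - x)) w :=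
    hd.hasFDerivAt.comp w (hasFDerivAt_sub_const x)
  have hnormal : ∀ u ∈ Ω, 0 ≤ ⟪gradient (gauge F) (w - x), u - w⟫ := fun u hu => by
    simpa [hgrad] using hmin.localize.hasFDerivWithinAt_nonneg hshift.hasFDerivWithinAt
      (sub_mem_posTangentConeAt_of_segment_subset (hΩ.segment_subset hw.1 hu))
  refine le_minTime_toReal hF hw.1 fun u hu => ?_
  have hconv := (convexOn_gauge hFconv hF).add_le_of_hasFDerivAt (mem_univ _)
    (mem_univ (u - s)) hd.hasFDerivAt
  rw [← hgrad, show u - s - (w - x) = (u - w) + (x - s) by abel,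
    inner_add_right, gauge_sub_eq_of_mem_genProj hF hw] at hconv
  linarith [hnormal u hu]

lemma minTime_add_inner_le_of_mem_genProj (hFconv : Convex ℝ F) (h0F : F ∈ 𝓝 0)
    (hΩ : Convex ℝ Ω) {g : X → X} (hg0 : g 0 = 0)
    (hg : ∀ y, y ≠ 0 → g y = gradient (gauge F) y)
    (hdiff : ∀ y, y ≠ 0 → DifferentiableAt ℝ (gauge F) y) (hw : w ∈ genProj F Ω x) (s : X) :
    (minTime F Ω x).toReal + ⟪g (w - x), x - s⟫ ≤ (minTime F Ω s).toReal := by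
  by_cases hwx : w - x = 0
  · rw [hwx, hg0, inner_zero_left, add_zero,
      ← gauge_sub_eq_of_mem_genProj (absorbent_nhds_zero h0F) hw, hwx, gauge_zero]
    exact EReal.toReal_nonneg minTime_nonneg
  · rw [hg _ hwx]
    exact minTime_add_inner_gradient_le hFconv h0F hΩ hw (hdiff _ hwx) s

lemma isSubgradientIteration_of_mem_genProj {ι : Type*} [Fintype ι] {Ω : ι → Set X}
    (hFconv : Convex ℝ F) (h0F : F ∈ 𝓝 0) (hΩ : ∀ i, Convex ℝ (Ω i)) {g : X → X}
    (hg0 : g 0 = 0) (hg : ∀ y, y ≠ 0 → g y = gradient (gauge F) y)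
    (hdiff : ∀ y, y ≠ 0 → DifferentiableAt ℝ (gauge F) y) {α : ℕ → ℝ} {x : ℕ → X}
    {w : ℕ → ι → X} (hw : ∀ k i, w k i ∈ genProj F (Ω i) (x k))
    (hrec : ∀ k, x (k + 1) = x k + α k • ∑ i, g (w k i - x k)) :
    IsSubgradientIteration (fun y => ∑ i, (minTime F (Ω i) y).toReal) α x
      fun k => -∑ i, g (w k i - x k) := by
  refine ⟨fun k s => ?_, fun k => by rw [hrec k, smul_neg, sub_neg_eq_add]⟩
  rw [inner_neg_left, ← inner_neg_right, neg_sub, sum_inner, ← Finset.sum_add_distrib]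
  exact Finset.sum_le_sum fun i _ =>
    minTime_add_inner_le_of_mem_genProj hFconv h0F (hΩ i) hg0 hg hdiff (hw k i) s

end GaugeSubgradient

theorem stmt_12_general {X : Type*} [NormedAddCommGroup X] [InnerProductSpace ℝ X]
    [FiniteDimensional ℝ X]
    (F : Set X) (hFconv : Convex ℝ F)
    (h0F : (0 : X) ∈ interior F)
    (ρ : X → ℝ) (hρ : ∀ y, ρ y = (gaugeE F y).toReal)
    (hdiff : ∀ y : X, y ≠ 0 → DifferentiableAt ℝ ρ y)
    (g : X → X) (hg0 : g 0 = 0) (hg : ∀ y : X, y ≠ 0 → g y = gradient ρ y)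
    (n : ℕ) (Ω : Fin n → Set X)
    (hΩconv : ∀ i, Convex ℝ (Ω i))
    (T : X → ℝ) (hT : ∀ x, T x = ∑ i, (minTime F (Ω i) x).toReal)
    (S : Set X) (hS : S = {x | ∀ y, T x ≤ T y}) (hSne : S.Nonempty)
    (L : ℝ) (hL : 0 ≤ L) (hLip : ∀ x y, |T x - T y| ≤ L * ‖x - y‖)
    (α : ℕ → ℝ) (hα : ∀ k, 0 < α k)
    (hdiv : ¬ Summable α) (hsq : Summable (fun k => α k ^ 2))
    (x : ℕ → X) (w : ℕ → Fin n → X)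
    (hw : ∀ k i, w k i ∈ genProj F (Ω i) (x k))
    (hrec : ∀ k, x (k + 1) = x k + α k • ∑ i, g (w k i - x k))
    (V : ℕ → ℝ) (hV : ∀ k, V k = sInf {r | ∃ j ≤ k, r = T (x j)}) :
    (∃ xb ∈ S, Filter.Tendsto x Filter.atTop (nhds xb)) ∧
    Filter.Tendsto V Filter.atTop (nhds (⨅ y, T y)) ∧
    ∀ k, V k - (⨅ y, T y) ≤
      (Metric.infDist (x 0) S ^ 2 + L ^ 2 * (∑' j, α j ^ 2)) /
        (2 * ∑ j ∈ Finset.range (k + 1), α j) := by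
  have h0F' : F ∈ 𝓝 0 := mem_interior_iff_mem_nhds.mp h0F
  obtain rfl : ρ = gauge F :=
    funext fun y => (hρ y).trans (gaugeE_toReal (absorbent_nhds_zero h0F') y)
  have hiter : IsSubgradientIteration T α x fun k => -∑ i, g (w k i - x k) := by
    rw [funext hT]
    exact isSubgradientIteration_of_mem_genProj hFconv h0F' hΩconv hg0 hg hdiff hw hrec
  have hTlip : LipschitzWith ⟨L, hL⟩ T :=
    .of_dist_le_mul fun a b => by rw [Real.dist_eq, dist_eq_norm]; exact hLip a b
  subst hS
  obtain ⟨s₀, hs₀ : ∀ y, T s₀ ≤ T y⟩ := hSne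
  have hinf : ⨅ y, T y = T s₀ :=
    ciInf_eq_of_forall_ge_of_forall_gt_exists_lt hs₀ fun _ h => ⟨s₀, h⟩
  have hVle (k : ℕ) : ∀ j ≤ k, V k ≤ T (x j) := fun j hj => hV k ▸
    csInf_le ⟨T s₀, by rintro _ ⟨i, -, rfl⟩; exact hs₀ _⟩ ⟨j, hj, rfl⟩
  have hVge (k : ℕ) : T s₀ ≤ V k := hV k ▸
    le_csInf ⟨_, k, le_rfl, rfl⟩ (by rintro _ ⟨j, -, rfl⟩; exact hs₀ _)
  refine ⟨?_, hinf ▸ hiter.tendsto_of_le_of_le_iterates hTlip hα hdiv hsq hVge hVle, fun k => ?_⟩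
  · exact hiter.exists_tendsto_minimizer hTlip (fun k => (hα k).le) hdiv hsq hs₀
  · have hScl : IsClosed {x | ∀ y, T x ≤ T y} := ofPred_forall (fun y x => T x ≤ T y) ▸
      isClosed_iInter fun y => isClosed_le hTlip.continuous continuous_const
    obtain ⟨s, hs : ∀ y, T s ≤ T y, hdist⟩ := hScl.exists_infDist_eq_dist ⟨s₀, hs₀⟩ (x 0)
    rw [hinf, le_antisymm (hs₀ s) (hs s₀), hdist, dist_eq_norm]
    exact hiter.sub_le_div_sum hTlip hα hsq s (hVle k)

/-- Subgradient algorithm for the generalized Fermat–Torricelli problem under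
smoothness of the Minkowski gauge off the origin. -/
theorem stmt_12 {X : Type*} [NormedAddCommGroup X] [InnerProductSpace ℝ X]
    [FiniteDimensional ℝ X]
    (F : Set X) (hFne : F.Nonempty) (hFcl : IsClosed F)
    (hFbd : Bornology.IsBounded F) (hFconv : Convex ℝ F)
    (h0F : (0 : X) ∈ interior F)
    (ρ : X → ℝ) (hρ : ∀ y, ρ y = (gaugeE F y).toReal)
    (hdiff : ∀ y : X, y ≠ 0 → DifferentiableAt ℝ ρ y)
    (g : X → X) (hg0 : g 0 = 0) (hg : ∀ y : X, y ≠ 0 → g y = gradient ρ y)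
    (n : ℕ) (Ω : Fin n → Set X)
    (hΩne : ∀ i, (Ω i).Nonempty) (hΩcl : ∀ i, IsClosed (Ω i))
    (hΩconv : ∀ i, Convex ℝ (Ω i))
    (T : X → ℝ) (hT : ∀ x, T x = ∑ i, (minTime F (Ω i) x).toReal)
    (S : Set X) (hS : S = {x | ∀ y, T x ≤ T y}) (hSne : S.Nonempty)
    (L : ℝ) (hL : 0 ≤ L) (hLip : ∀ x y, |T x - T y| ≤ L * ‖x - y‖)
    (α : ℕ → ℝ) (hα : ∀ k, 0 < α k)
    (hdiv : ¬ Summable α) (hsq : Summable (fun k => α k ^ 2))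
    (x : ℕ → X) (w : ℕ → Fin n → X)
    (hw : ∀ k i, w k i ∈ genProj F (Ω i) (x k))
    (hrec : ∀ k, x (k + 1) = x k + α k • ∑ i, g (w k i - x k))
    (V : ℕ → ℝ) (hV : ∀ k, V k = sInf {r | ∃ j ≤ k, r = T (x j)}) :
    (∃ xb ∈ S, Filter.Tendsto x Filter.atTop (nhds xb)) ∧
    Filter.Tendsto V Filter.atTop (nhds (⨅ y, T y)) ∧
    ∀ k, V k - (⨅ y, T y) ≤
      (Metric.infDist (x 0) S ^ 2 + L ^ 2 * (∑' j, α j ^ 2)) /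
        (2 * ∑ j ∈ Finset.range (k + 1), α j) :=
  stmt_12_general F hFconv h0F ρ hρ hdiff g hg0 hg n Ω hΩconv T hT S hS hSne L hL hLip α hα hdiv hsq
    x w hw hrec V hV
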